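/- On ℝ^{2m} with coordinates x¹,…,x^{2m}, for each integer r ≥ 0 define the bivector P_r in block form P_r = [[0, Λ_r], [−Λ_r, 0]], where Λ_r = diag((x¹)^r, …, (x^m)^r) is the diagonal m×m matrix. Then: (i) every P_r is a Poisson bivector; (ii) P_r = L_{τ_r}(P₀) where τ_r is the vector field (−(x¹)^{r+1}/(r+1), …, −(x^m)^{r+1}/(r+1), 0, …, 0); and (iii) [P_r, P_s] = 0 for all integers r, s ≥ 0, i.e. the Poisson bivectors P_r are pairwise compatible. -/

import Mathlib

open Matrix BigOperators

noncomputable section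

/-- Partial derivative of a scalar function on ℝⁿ in the `k`-th coordinate direction. -/
def pd {n : ℕ} (k : Fin n) (f : (Fin n → ℝ) → ℝ) (x : Fin n → ℝ) : ℝ :=
  fderiv ℝ f x (Pi.single k 1)

/-- A (smooth) bivector on ℝⁿ: a smooth field of antisymmetric matrices. -/
def IsBivector {n : ℕ} (P : (Fin n → ℝ) → Matrix (Fin n) (Fin n) ℝ) : Prop :=
  (∀ i j, ContDiff ℝ (⊤ : ℕ∞) fun x => P x i j) ∧ ∀ x, (P x)ᵀ = -P x

/-- A smooth vector field on ℝⁿ. -/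
def IsVectorField {n : ℕ} (τ : (Fin n → ℝ) → (Fin n → ℝ)) : Prop :=
  ∀ i, ContDiff ℝ (⊤ : ℕ∞) fun x => τ x i

/-- Components of the Schouten bracket of two bivectors:
`[H,K]^{ijk} = -∑ₘ (K^{mk} ∂ₘH^{ij} + H^{mk} ∂ₘK^{ij} + cyclic permutations of (i,j,k))`. -/
def schouten {n : ℕ} (H K : (Fin n → ℝ) → Matrix (Fin n) (Fin n) ℝ)
    (x : Fin n → ℝ) (i j k : Fin n) : ℝ :=
  -∑ m, (K x m k * pd m (fun y => H y i j) x + H x m k * pd m (fun y => K y i j) x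
       + K x m i * pd m (fun y => H y j k) x + H x m i * pd m (fun y => K y j k) x
       + K x m j * pd m (fun y => H y k i) x + H x m j * pd m (fun y => K y k i) x)

/-- Lie derivative of a bivector along a vector field:
`(L_τ P)^{ij} = ∑ₖ (τ^k ∂ₖP^{ij} - P^{kj} ∂ₖτ^i - P^{ik} ∂ₖτ^j)`. -/
def lieD {n : ℕ} (τ : (Fin n → ℝ) → (Fin n → ℝ))
    (P : (Fin n → ℝ) → Matrix (Fin n) (Fin n) ℝ)
    (x : Fin n → ℝ) : Matrix (Fin n) (Fin n) ℝ :=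
  Matrix.of fun i j => ∑ k, (τ x k * pd k (fun y => P y i j) x
    - P x k j * pd k (fun y => τ y i) x - P x i k * pd k (fun y => τ y j) x)

/-- A Poisson bivector: a bivector whose Schouten bracket with itself vanishes. -/
def IsPoisson {n : ℕ} (P : (Fin n → ℝ) → Matrix (Fin n) (Fin n) ℝ) : Prop :=
  IsBivector P ∧ ∀ x i j k, schouten P P x i j k = 0

/-- Two bivectors are compatible if their Schouten bracket vanishes. -/
def Compatible {n : ℕ} (P Q : (Fin n → ℝ) → Matrix (Fin n) (Fin n) ℝ) : Prop :=
  ∀ x i j k, schouten P Q x i j k = 0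

/-- The bivector `P_r = [[0, Λ_r], [−Λ_r, 0]]` on `ℝ^{2m}`, where
`Λ_r = diag((x¹)^r, …, (x^m)^r)`. -/
def Pblock (m r : ℕ) (x : Fin (2 * m) → ℝ) : Matrix (Fin (2 * m)) (Fin (2 * m)) ℝ :=
  Matrix.of fun i j =>
    if (i : ℕ) < m ∧ (j : ℕ) = (i : ℕ) + m then (x i) ^ r
    else if (j : ℕ) < m ∧ (i : ℕ) = (j : ℕ) + m then -((x j) ^ r)
    else 0

/-- The vector field `τ_r = (−(x¹)^{r+1}/(r+1), …, −(x^m)^{r+1}/(r+1), 0, …, 0)`. -/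
def tauBlock (m r : ℕ) (x : Fin (2 * m) → ℝ) : Fin (2 * m) → ℝ :=
  fun i => if (i : ℕ) < m then -((x i) ^ (r + 1)) / ((r : ℝ) + 1) else 0

lemma hasFDerivAt_pow_apply {n r : ℕ} (i : Fin n) (x : Fin n → ℝ) :
    HasFDerivAt (fun y : Fin n → ℝ => (y i) ^ r)
      (((r : ℝ) * (x i) ^ (r - 1)) • ContinuousLinearMap.proj (R := ℝ) (φ := fun _ : Fin n => ℝ) i) x := by
  have h1 : HasDerivAt (fun t : ℝ => t ^ r) ((r : ℝ) * (x i) ^ (r - 1)) (x i) :=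
    hasDerivAt_pow r (x i)
  have h2 : HasFDerivAt (fun y : Fin n → ℝ => y i)
      (ContinuousLinearMap.proj (R := ℝ) (φ := fun _ : Fin n => ℝ) i) x :=
    (ContinuousLinearMap.proj (R := ℝ) (φ := fun _ : Fin n => ℝ) i).hasFDerivAt
  exact h1.comp_hasFDerivAt x h2

lemma pd_pow {n r : ℕ} (k i : Fin n) (x : Fin n → ℝ) :
    pd k (fun y => (y i) ^ r) x = if (i : ℕ) = (k : ℕ) then (r : ℝ) * (x i) ^ (r - 1) else 0 := by
  rw [pd, (hasFDerivAt_pow_apply (r := r) i x).fderiv]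
  simp [Pi.single_apply, Fin.ext_iff]

lemma pd_neg_pow {n r : ℕ} (k i : Fin n) (x : Fin n → ℝ) :
    pd k (fun y => -((y i) ^ r)) x
      = if (i : ℕ) = (k : ℕ) then -((r : ℝ) * (x i) ^ (r - 1)) else 0 := by
  have : pd k (fun y => -((y i) ^ r)) x = -(pd k (fun y => (y i) ^ r) x) := by
    rw [pd, pd, fderiv_fun_neg]; simp
  rw [this, pd_pow]
  split_ifs <;> simp

lemma pd_const {n : ℕ} (k : Fin n) (c : ℝ) (x : Fin n → ℝ) :
    pd k (fun _ => c) x = 0 := by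
  rw [pd, fderiv_fun_const]; simp

lemma pd_Pblock {m r : ℕ} (i j l : Fin (2 * m)) (x : Fin (2 * m) → ℝ) :
    pd l (fun y => Pblock m r y i j) x
      = if (i : ℕ) < m ∧ (j : ℕ) = (i : ℕ) + m ∧ (l : ℕ) = (i : ℕ) then
          (r : ℝ) * (x i) ^ (r - 1)
        else if (j : ℕ) < m ∧ (i : ℕ) = (j : ℕ) + m ∧ (l : ℕ) = (j : ℕ) then
          -((r : ℝ) * (x j) ^ (r - 1))
        else 0 := by
  by_cases h1 : (i : ℕ) < m ∧ (j : ℕ) = (i : ℕ) + m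
  · have : (fun y => Pblock m r y i j) = fun y : Fin (2*m) → ℝ => (y i) ^ r := by
      funext y; simp [Pblock, h1]
    rw [this, pd_pow]
    have h2 : ¬((j : ℕ) < m ∧ (i : ℕ) = (j : ℕ) + m) := by omega
    by_cases h3 : (l : ℕ) = (i : ℕ)
    · simp [h1, h2, h3]
    · rw [if_neg (by omega), if_neg (by omega), if_neg (by omega)]
  · by_cases h2 : (j : ℕ) < m ∧ (i : ℕ) = (j : ℕ) + m
    · have : (fun y => Pblock m r y i j) = fun y : Fin (2*m) → ℝ => -((y j) ^ r) := by
        funext y; simp [Pblock, h1, h2]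
      rw [this, pd_neg_pow]
      by_cases h3 : (l : ℕ) = (j : ℕ)
      · simp [h1, h2, h3]
      · rw [if_neg (by omega), if_neg (by tauto), if_neg (by omega)]
    · have : (fun y => Pblock m r y i j) = fun _ : Fin (2*m) → ℝ => (0:ℝ) := by
        funext y; simp [Pblock, h1, h2]
      rw [this, pd_const, if_neg (by tauto), if_neg (by tauto)]

lemma pd_tau {m r : ℕ} (i l : Fin (2 * m)) (x : Fin (2 * m) → ℝ) :
    pd l (fun y => tauBlock m r y i) x
      = if (i : ℕ) < m ∧ (l : ℕ) = (i : ℕ) then -((x i) ^ r) else 0 := by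
  by_cases h1 : (i : ℕ) < m
  · have hfun : (fun y => tauBlock m r y i)
        = fun y : Fin (2*m) → ℝ => (((r : ℝ) + 1)⁻¹) * (-((y i) ^ (r+1))) := by
      funext y; simp [tauBlock, h1]; ring
    have hr : ((r : ℝ) + 1) ≠ 0 := by positivity
    have hD := (hasFDerivAt_pow_apply (n := 2*m) (r := r+1) i x).fun_neg
    rw [hfun, pd, (hD.const_mul (((r : ℝ) + 1)⁻¹)).fderiv]
    simp only [ContinuousLinearMap.neg_apply, ContinuousLinearMap.smul_apply,
      ContinuousLinearMap.proj_apply, smul_eq_mul, Pi.single_apply]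
    by_cases h3 : (l : ℕ) = (i : ℕ)
    · rw [if_pos (show i = l from Fin.ext h3.symm), if_pos ⟨h1, h3⟩]
      have : (r + 1 - 1) = r := by omega
      rw [this]
      push_cast
      field_simp
    · rw [if_neg (fun h => h3 (by rw [h])), if_neg (by tauto)]
      ring
  · have : (fun y => tauBlock m r y i) = fun _ : Fin (2*m) → ℝ => (0:ℝ) := by
      funext y; simp [tauBlock, h1]
    rw [this, pd_const, if_neg (by tauto)]

lemma key_cancel (p q i j k : ℕ) (hpq : p ≠ q) (c e : ℝ) :
    (if (k : ℕ) = q then e else 0) * (if i = p ∧ j = q then c else if j = p ∧ i = q then -c else 0)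
  + (if (i : ℕ) = q then e else 0) * (if j = p ∧ k = q then c else if k = p ∧ j = q then -c else 0)
  + (if (j : ℕ) = q then e else 0) * (if k = p ∧ i = q then c else if i = p ∧ k = q then -c else 0)
    = 0 := by
  split_ifs <;> try ring
  all_goals (exfalso; omega)

lemma Pblock_entry_lt {m s : ℕ} (x : Fin (2*m) → ℝ) (l c : Fin (2*m)) (hl : (l : ℕ) < m) :
    Pblock m s x l c = if (c : ℕ) = (l : ℕ) + m then (x l) ^ s else 0 := by
  by_cases h : (c : ℕ) = (l : ℕ) + m
  · simp [Pblock, hl, h]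
  · rw [Pblock, Matrix.of_apply, if_neg (by omega), if_neg (by omega), if_neg h]

lemma pd_Pblock_lt {m r : ℕ} (a b l : Fin (2 * m)) (x : Fin (2 * m) → ℝ) (hl : (l : ℕ) < m) :
    pd l (fun y => Pblock m r y a b) x
      = if (a : ℕ) = (l : ℕ) ∧ (b : ℕ) = (l : ℕ) + m then (r : ℝ) * (x l) ^ (r - 1)
        else if (b : ℕ) = (l : ℕ) ∧ (a : ℕ) = (l : ℕ) + m then -((r : ℝ) * (x l) ^ (r - 1))
        else 0 := by
  rw [pd_Pblock]
  by_cases h1 : (a : ℕ) = (l : ℕ) ∧ (b : ℕ) = (l : ℕ) + m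
  · rw [if_pos (by omega), if_pos h1]
    have : a = l := Fin.ext h1.1
    rw [this]
  · rw [if_neg (by omega), if_neg h1]
    by_cases h2 : (b : ℕ) = (l : ℕ) ∧ (a : ℕ) = (l : ℕ) + m
    · rw [if_pos (by omega), if_pos h2]
      have : b = l := Fin.ext h2.1
      rw [this]
    · rw [if_neg (by omega), if_neg h2]

lemma pd_Pblock_ge {m r : ℕ} (a b l : Fin (2 * m)) (x : Fin (2 * m) → ℝ) (hl : ¬ (l : ℕ) < m) :
    pd l (fun y => Pblock m r y a b) x = 0 := by
  rw [pd_Pblock, if_neg (by omega), if_neg (by omega)]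

lemma schouten_summand_zero (m : ℕ) (hm : 1 ≤ m) (r s : ℕ)
    (x : Fin (2*m) → ℝ) (i j k l : Fin (2*m)) :
    Pblock m s x l k * pd l (fun y => Pblock m r y i j) x
      + Pblock m r x l k * pd l (fun y => Pblock m s y i j) x
      + Pblock m s x l i * pd l (fun y => Pblock m r y j k) x
      + Pblock m r x l i * pd l (fun y => Pblock m s y j k) x
      + Pblock m s x l j * pd l (fun y => Pblock m r y k i) x
      + Pblock m r x l j * pd l (fun y => Pblock m s y k i) x = 0 := by
  by_cases hl : (l : ℕ) < m
  · rw [pd_Pblock_lt (r := r) i j l x hl, pd_Pblock_lt (r := s) i j l x hl,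
      pd_Pblock_lt (r := r) j k l x hl, pd_Pblock_lt (r := s) j k l x hl,
      pd_Pblock_lt (r := r) k i l x hl, pd_Pblock_lt (r := s) k i l x hl,
      Pblock_entry_lt (s := s) x l k hl, Pblock_entry_lt (s := r) x l k hl,
      Pblock_entry_lt (s := s) x l i hl, Pblock_entry_lt (s := r) x l i hl,
      Pblock_entry_lt (s := s) x l j hl, Pblock_entry_lt (s := r) x l j hl]
    have h1 := key_cancel (l : ℕ) ((l : ℕ) + m) (i : ℕ) (j : ℕ) (k : ℕ) (by omega)
      ((r : ℝ) * (x l) ^ (r - 1)) ((x l) ^ s)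
    have h2 := key_cancel (l : ℕ) ((l : ℕ) + m) (i : ℕ) (j : ℕ) (k : ℕ) (by omega)
      ((s : ℝ) * (x l) ^ (s - 1)) ((x l) ^ r)
    linear_combination h1 + h2
  · rw [pd_Pblock_ge (r := r) i j l x hl, pd_Pblock_ge (r := s) i j l x hl,
      pd_Pblock_ge (r := r) j k l x hl, pd_Pblock_ge (r := s) j k l x hl,
      pd_Pblock_ge (r := r) k i l x hl, pd_Pblock_ge (r := s) k i l x hl]
    ring

lemma Pblock_contDiff (m r : ℕ) :
    ∀ i j, ContDiff ℝ (⊤ : ℕ∞) fun x => Pblock m r x i j := by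
  intro i j
  by_cases h1 : (i : ℕ) < m ∧ (j : ℕ) = (i : ℕ) + m
  · have : (fun x : Fin (2*m) → ℝ => Pblock m r x i j) = fun x => (x i) ^ r := by
      funext y; simp [Pblock, h1]
    rw [this]
    exact ((ContinuousLinearMap.proj (R := ℝ) (φ := fun _ : Fin (2*m) => ℝ) i).contDiff).pow r
  · by_cases h2 : (j : ℕ) < m ∧ (i : ℕ) = (j : ℕ) + m
    · have : (fun x : Fin (2*m) → ℝ => Pblock m r x i j) = fun x => -((x j) ^ r) := by
        funext y; simp [Pblock, h1, h2]
      rw [this]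
      exact (((ContinuousLinearMap.proj (R := ℝ) (φ := fun _ : Fin (2*m) => ℝ) j).contDiff).pow r).neg
    · have : (fun x : Fin (2*m) → ℝ => Pblock m r x i j) = fun _ => (0:ℝ) := by
        funext y; simp [Pblock, h1, h2]
      rw [this]
      exact contDiff_const

lemma Pblock_anti (m r : ℕ) (hm : 1 ≤ m) (x : Fin (2*m) → ℝ) :
    (Pblock m r x)ᵀ = -(Pblock m r x) := by
  ext i j
  simp only [Matrix.transpose_apply, Matrix.neg_apply, Pblock, Matrix.of_apply]
  split_ifs <;> try ring
  all_goals (exfalso; omega)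

lemma lieD_summand (m r : ℕ) (x : Fin (2*m) → ℝ) (i j k' : Fin (2*m)) :
    tauBlock m r x k' * pd k' (fun y => Pblock m 0 y i j) x
      - Pblock m 0 x k' j * pd k' (fun y => tauBlock m r y i) x
      - Pblock m 0 x i k' * pd k' (fun y => tauBlock m r y j) x
    = (if k' = i then (if (i:ℕ) < m then Pblock m 0 x k' j * (x k')^r else 0) else 0)
      + (if k' = j then (if (j:ℕ) < m then Pblock m 0 x i k' * (x k')^r else 0) else 0) := by
  have h0 : pd k' (fun y => Pblock m 0 y i j) x = 0 := by
    rw [pd_Pblock]; split_ifs <;> norm_num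
  rw [h0, pd_tau, pd_tau, mul_zero]
  by_cases h1 : k' = i
  · subst h1
    by_cases h2 : k' = j
    · subst h2
      by_cases h3 : (k' : ℕ) < m <;> simp [h3] <;> try ring
    · have h2n : (k' : ℕ) ≠ (j : ℕ) := fun h => h2 (Fin.ext h)
      rw [if_pos rfl, if_neg h2]
      by_cases h3 : (k' : ℕ) < m
      · rw [if_pos ⟨h3, rfl⟩, if_neg (by tauto), if_pos h3]; ring
      · rw [if_neg (by tauto), if_neg (by tauto), if_neg h3]; ring
  · have h1n : (k' : ℕ) ≠ (i : ℕ) := fun h => h1 (Fin.ext h)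
    rw [if_neg h1, if_neg (by tauto)]
    by_cases h2 : k' = j
    · subst h2
      rw [if_pos rfl]
      by_cases h3 : (k' : ℕ) < m
      · rw [if_pos ⟨h3, rfl⟩, if_pos h3]; ring
      · rw [if_neg (by tauto), if_neg h3]; ring
    · have h2n : (k' : ℕ) ≠ (j : ℕ) := fun h => h2 (Fin.ext h)
      rw [if_neg (by tauto), if_neg h2]; ring

lemma lieD_eq (m r : ℕ) (hm : 1 ≤ m) (x : Fin (2*m) → ℝ) :
    Pblock m r x = lieD (tauBlock m r) (Pblock m 0) x := by
  ext i j
  rw [lieD, Matrix.of_apply,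
    Finset.sum_congr rfl (fun k' _ => lieD_summand m r x i j k'),
    Finset.sum_add_distrib, Finset.sum_ite_eq', Finset.sum_ite_eq']
  simp only [Finset.mem_univ, if_true]
  simp only [Pblock, Matrix.of_apply, pow_zero]
  split_ifs <;> try ring
  all_goals (exfalso; omega)

lemma schouten_Pblock_zero' (m : ℕ) (hm : 1 ≤ m) (r s : ℕ) (x : Fin (2*m) → ℝ)
    (i j k : Fin (2*m)) :
    -∑ l, (Pblock m s x l k * pd l (fun y => Pblock m r y i j) x
      + Pblock m r x l k * pd l (fun y => Pblock m s y i j) x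
      + Pblock m s x l i * pd l (fun y => Pblock m r y j k) x
      + Pblock m r x l i * pd l (fun y => Pblock m s y j k) x
      + Pblock m s x l j * pd l (fun y => Pblock m r y k i) x
      + Pblock m r x l j * pd l (fun y => Pblock m s y k i) x) = 0 := by
  rw [neg_eq_zero]
  exact Finset.sum_eq_zero fun l _ => schouten_summand_zero m hm r s x i j k l

/-- (i) every `P_r` is a Poisson bivector; (ii) `P_r = L_{τ_r}(P₀)`;
(iii) the `P_r` are pairwise compatible. -/
theorem Pblock_poisson_pairwise_compatible (m : ℕ) (hm : 1 ≤ m) :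
    (∀ r : ℕ, IsPoisson (Pblock m r)) ∧
      (∀ r : ℕ, ∀ x, Pblock m r x = lieD (tauBlock m r) (Pblock m 0) x) ∧
      (∀ r s : ℕ, Compatible (Pblock m r) (Pblock m s)) := by
  refine ⟨fun r => ⟨⟨Pblock_contDiff m r, Pblock_anti m r hm⟩,
      fun x i j k => schouten_Pblock_zero' m hm r r x i j k⟩,
    fun r x => lieD_eq m r hm x,
    fun r s x i j k => schouten_Pblock_zero' m hm r s x i j k⟩
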